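/- Let (X, μ, T) be a dynamical system. Then there exist an inessential reduction X̃ ⊂ X and a countable base (O_i)_{i=1}^∞ of the topology of ℝ such that for every i the set {x ∈ X̃ : ρ_μ(x, Tx) ∈ O_i} is clopen in X̃ (in the relative topology), where ρ_μ(x, Tx) = log ω(x). -/

import Mathlib

open MeasureTheory Topology

/-- `X` is 0-dimensional: it has a countable base of clopen sets. -/
def ZeroDimensional (X : Type*) [TopologicalSpace X] : Prop :=
  ∃ b : Set (Set X), b.Countable ∧ (∀ s ∈ b, IsClopen s) ∧
    TopologicalSpace.IsTopologicalBasis b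

/-- A dynamical system: a non-atomic Borel probability measure of full support on a
topological space together with an ergodic non-singular homeomorphism whose
Radon–Nikodym derivative `d(μ∘T)/dμ` has the continuous version `ω`. -/
structure DynSys (X : Type*) [TopologicalSpace X] [MeasurableSpace X] where
  μ : Measure X
  T : X ≃ₜ X
  ω : X → ℝ
  prob : IsProbabilityMeasure μ
  noAtoms : NoAtoms μ
  fullSupport : ∀ U : Set X, IsOpen U → U.Nonempty → 0 < μ U
  ergodic : ∀ A : Set X, MeasurableSet A → (⇑T) ⁻¹' A = A → μ A = 0 ∨ μ A = 1
  ωCont : Continuous ω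
  ωPos : ∀ x, 0 < ω x
  rnDeriv : Measure.map (⇑T.symm) μ = μ.withDensity (fun x => ENNReal.ofReal (ω x))

namespace DynSys

variable {X Y : Type*} [TopologicalSpace X] [MeasurableSpace X]
  [TopologicalSpace Y] [MeasurableSpace Y]

/-- The iterate `Tⁿ` for `n : ℤ`. -/
noncomputable def iter (D : DynSys X) (n : ℤ) (x : X) : X :=
  (D.T.toEquiv ^ n) x

/-- The Radon–Nikodym cocycle `ρ_μ(x, Tⁿx)`. -/
noncomputable def rho (D : DynSys X) (x : X) (n : ℤ) : ℝ :=
  if 0 ≤ n then ∑ i ∈ Finset.range n.toNat, Real.log (D.ω (D.iter (i : ℤ) x))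
  else - ∑ i ∈ Finset.range (-n).toNat, Real.log (D.ω (D.iter (i : ℤ) (D.iter n x)))

/-- An inessential reduction: a `T`-invariant dense `G_δ` subset of full measure. -/
def InessRed (D : DynSys X) (X' : Set X) : Prop :=
  (⇑D.T) ⁻¹' X' = X' ∧ Dense X' ∧ IsGδ X' ∧ D.μ X' = 1

/-- A set is virtually clopen if its intersection with some inessential reduction `X'`
is relatively clopen in `X'`. -/
def VirtClopen (D : DynSys X) (A : Set X) : Prop :=
  ∃ X' : Set X, D.InessRed X' ∧ IsClopen (Subtype.val ⁻¹' A : Set X')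

/-- The asymptotic range `r(ρ_μ)` of the Radon–Nikodym cocycle. -/
def asymRange (D : DynSys X) : Set ℝ :=
  {t | ∀ ε : ℝ, 0 < ε → ∀ A : Set X, MeasurableSet A → 0 < D.μ A →
    ∃ k : ℤ, k ≠ 0 ∧ ∃ B : Set X, MeasurableSet B ∧ B ⊆ A ∧ 0 < D.μ B ∧
      ∀ x ∈ B, |D.rho x k - t| < ε}

/-- The topological asymptotic range `r_top(ρ_μ)` of the Radon–Nikodym cocycle. -/
def topAsymRange (D : DynSys X) : Set ℝ :=
  {t | ∀ ε : ℝ, 0 < ε → ∀ A : Set X, D.VirtClopen A → 0 < D.μ A →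
    ∃ k : ℤ, k ≠ 0 ∧ ∃ B : Set X, B ⊆ A ∧ 0 < D.μ B ∧
      ∀ x ∈ B, |D.rho x k - t| < ε}

/-- Type `III`: there is no equivalent σ-finite `T`-invariant measure. -/
def TypeIII (D : DynSys X) : Prop :=
  ¬ ∃ ν : Measure X, SigmaFinite ν ∧ ν ≪ D.μ ∧ D.μ ≪ ν ∧ Measure.map (⇑D.T) ν = ν

/-- Almost continuous orbit equivalence of two dynamical systems. -/
def ACOE (D : DynSys X) (E : DynSys Y) : Prop :=
  ∃ (X₀ : Set X) (Y₀ : Set Y) (φ : X → Y) (ψ : Y → X),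
    D.InessRed X₀ ∧ E.InessRed Y₀ ∧
    Set.BijOn φ X₀ Y₀ ∧ ContinuousOn φ X₀ ∧ ContinuousOn ψ Y₀ ∧ Set.InvOn ψ φ X₀ Y₀ ∧
    (∀ x ∈ X₀, φ '' {z | ∃ k : ℤ, z = D.iter k x} = {w | ∃ k : ℤ, w = E.iter k (φ x)}) ∧
    (∃ f : Y → ℝ, ContinuousOn f Y₀ ∧ (∀ y ∈ Y₀, 0 < f y) ∧
      ∀ A : Set Y, MeasurableSet A →
        D.μ (φ ⁻¹' A ∩ X₀) = ∫⁻ y in A, ENNReal.ofReal (f y) ∂E.μ) ∧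
    (∃ n m : X → ℤ, ContinuousOn n X₀ ∧ ContinuousOn m X₀ ∧
      ∀ x ∈ X₀, φ (D.T x) = E.iter (n x) (φ x) ∧ E.T (φ x) = φ (D.iter (m x) x))

end DynSys

/-- An `r`-uniform subrelation of `R_T` on the clopen set `C`, with fundamental
(clopen) subset `B` and splitting homeomorphism `(i, b) ↦ h i b : I_r × B → C`,
each `h i` being given on `B` by `h i b = T^(a i b) b` with `a i` continuous
(i.e. `h i` belongs to the topological full groupoid `[[T]]_top`);
`proj` and `idx` form the continuous inverse, `proj` being the associated projection. -/
structure UniformRel {X : Type*} [TopologicalSpace X] [MeasurableSpace X]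
    (D : DynSys X) (r : ℕ) (C B : Set X) where
  rpos : 0 < r
  h : Fin r → X → X
  a : Fin r → X → ℤ
  clopenB : IsClopen B
  subB : B ⊆ C
  h_zero : ∀ b ∈ B, h ⟨0, rpos⟩ b = b
  h_eq : ∀ (i : Fin r), ∀ b ∈ B, h i b = D.iter (a i b) b
  a_cont : ∀ i : Fin r, ContinuousOn (a i) B
  h_cont : ∀ i : Fin r, ContinuousOn (h i) B
  maps : ∀ i : Fin r, Set.MapsTo (h i) B C
  inj : ∀ (i j : Fin r), ∀ b ∈ B, ∀ b' ∈ B, h i b = h j b' → i = j ∧ b = b'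
  proj : X → X
  idx : X → Fin r
  proj_cont : ContinuousOn proj C
  idx_cont : ContinuousOn idx C
  proj_mem : ∀ x ∈ C, proj x ∈ B
  h_proj : ∀ x ∈ C, h (idx x) (proj x) = x

/-!
Since `μ` is finite, only countably many level sets of `log ω` have positive measure, so there is a
countable dense set `E ⊆ ℝ` of values whose level sets are null. Removing the `T`-orbit of
`(log ω)⁻¹(E)` leaves a `T`-invariant `G_δ` set of full measure, which is dense because `μ` has
full support. On it `log ω` never takes a value in `E`, so the intervals with endpoints in `E`,
which form a base of `ℝ`, pull back to relatively clopen sets.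
-/

open Set

lemma exists_denseRange_measure_preimage_singleton_eq_zero {α : Type*} [MeasurableSpace α]
    (μ : Measure α) [SFinite μ] {f : α → ℝ} (hf : Measurable f) :
    ∃ e : ℕ → ℝ, DenseRange e ∧ ∀ n, μ (f ⁻¹' {e n}) = 0 := by
  have hbad : {t : ℝ | 0 < μ {a | f a = t}}.Countable := Measure.countable_meas_level_set_pos hf
  obtain ⟨E, hE_good, hE_countable, hE_dense⟩ :=
    (hbad.dense_compl ℝ).exists_countable_dense_subset
  obtain ⟨e, rfl⟩ := hE_countable.exists_eq_range hE_dense.nonempty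
  exact ⟨e, hE_dense, fun n => nonpos_iff_eq_zero.1 (not_lt.1 (hE_good (mem_range_self n)))⟩

lemma DenseRange.exists_Ioo_unpair_mem_subset {α : Type*} [LinearOrder α] [TopologicalSpace α]
    [OrderTopology α] [DenselyOrdered α] [NoMinOrder α] [NoMaxOrder α] {e : ℕ → α}
    (he : DenseRange e) {U : Set α} (hU : IsOpen U) {t : α} (ht : t ∈ U) :
    ∃ i : ℕ, t ∈ Ioo (e i.unpair.1) (e i.unpair.2) ∧ Ioo (e i.unpair.1) (e i.unpair.2) ⊆ U := by
  obtain ⟨l, u, ⟨hlt, htu⟩, hsub⟩ := mem_nhds_iff_exists_Ioo_subset.1 (hU.mem_nhds ht)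
  obtain ⟨_, ⟨i, rfl⟩, hli, hit⟩ := he.exists_between hlt
  obtain ⟨_, ⟨j, rfl⟩, htj, hju⟩ := he.exists_between htu
  refine ⟨Nat.pair i j, ?_, ?_⟩
  · simpa using ⟨hit, htj⟩
  · simpa using (Ioo_subset_Ioo hli.le hju.le).trans hsub

lemma isClopen_preimage_Ioo_of_forall_ne {Y α : Type*} [TopologicalSpace Y] [LinearOrder α]
    [TopologicalSpace α] [OrderClosedTopology α] {g : Y → α} (hg : Continuous g) {a b : α}
    (ha : ∀ y, g y ≠ a) (hb : ∀ y, g y ≠ b) : IsClopen (g ⁻¹' Ioo a b) := by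
  have hIoo_eq_Icc : g ⁻¹' Ioo a b = g ⁻¹' Icc a b := by
    ext y
    simp [lt_iff_le_and_ne, hb y, (ha y).symm]
  exact ⟨hIoo_eq_Icc ▸ isClosed_Icc.preimage hg, isOpen_Ioo.preimage hg⟩

namespace DynSys

variable {X : Type*} [TopologicalSpace X] [MeasurableSpace X] (D : DynSys X)

lemma iter_eq_coe_zpow (n : ℤ) : D.iter n = ⇑(D.T ^ n) := by
  induction n using Int.induction_on with
  | zero => rfl
  | succ n ih =>
    funext x
    simp only [iter, zpow_add_one] at ih ⊢
    exact congrFun ih (D.T x)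
  | pred n ih =>
    funext x
    simp only [iter, zpow_sub_one] at ih ⊢
    exact congrFun ih (D.T.symm x)

lemma continuous_iter (n : ℤ) : Continuous (D.iter n) :=
  D.iter_eq_coe_zpow n ▸ (D.T ^ n).continuous

lemma iter_add_one (n : ℤ) : D.iter (n + 1) = D.iter n ∘ D.T := by
  rw [iter_eq_coe_zpow, iter_eq_coe_zpow, zpow_add_one]
  rfl

lemma iter_sub_one (n : ℤ) : D.iter (n - 1) = D.iter n ∘ D.T.symm := by
  rw [iter_eq_coe_zpow, iter_eq_coe_zpow, zpow_sub_one]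
  rfl

instance : IsProbabilityMeasure D.μ := D.prob

instance : D.μ.IsOpenPosMeasure := ⟨fun U hU hne => (D.fullSupport U hU hne).ne'⟩

variable [BorelSpace X]

lemma quasiMeasurePreserving_symm : Measure.QuasiMeasurePreserving D.T.symm D.μ D.μ :=
  ⟨D.T.symm.continuous.measurable, D.rnDeriv ▸ withDensity_absolutelyContinuous _ _⟩

lemma quasiMeasurePreserving_T : Measure.QuasiMeasurePreserving D.T D.μ D.μ := by
  refine ⟨D.T.continuous.measurable, ?_⟩
  have hω : ∀ᵐ x ∂D.μ, ENNReal.ofReal (D.ω x) ≠ 0 :=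
    ae_of_all _ fun x => (ENNReal.ofReal_pos.2 (D.ωPos x)).ne'
  have hac : D.μ ≪ D.μ.map D.T.symm :=
    D.rnDeriv ▸ withDensity_absolutelyContinuous' D.ωCont.measurable.ennreal_ofReal.aemeasurable hω
  simpa [Measure.map_map D.T.continuous.measurable D.T.symm.continuous.measurable]
    using hac.map D.T.continuous.measurable

lemma quasiMeasurePreserving_iter (n : ℤ) : Measure.QuasiMeasurePreserving (D.iter n) D.μ D.μ := by
  induction n using Int.induction_on with
  | zero => exact Measure.QuasiMeasurePreserving.id D.μ
  | succ n ih => exact D.iter_add_one n ▸ ih.comp D.quasiMeasurePreserving_T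
  | pred n ih => exact D.iter_sub_one _ ▸ ih.comp D.quasiMeasurePreserving_symm

lemma inessRed_iInter_preimage_iter {G : Set X} (hG : IsGδ G) (hG_ae : ∀ᵐ x ∂D.μ, x ∈ G) :
    D.InessRed (⋂ n : ℤ, D.iter n ⁻¹' G) := by
  set X' := ⋂ n : ℤ, D.iter n ⁻¹' G
  have hX'_Gδ : IsGδ X' := .iInter fun n => hG.preimage (D.continuous_iter n)
  have hX'_ae : ∀ᵐ x ∂D.μ, x ∈ X' := by
    simp only [X', mem_iInter, mem_preimage]
    exact ae_all_iff.2 fun n => (D.quasiMeasurePreserving_iter n).ae hG_ae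
  refine ⟨?_, Measure.dense_of_ae hX'_ae, hX'_Gδ, ?_⟩
  · ext x
    simp only [X', mem_preimage, mem_iInter]
    refine ⟨fun h n => ?_, fun h n => ?_⟩
    · simpa [iter_sub_one] using h (n - 1)
    · simpa [iter_add_one] using h (n + 1)
  · rw [← measure_univ (μ := D.μ)]
    exact (ae_iff_measure_eq hX'_Gδ.measurableSet.nullMeasurableSet).1 hX'_ae

end DynSys

theorem exists_inessential_reduction_clopen_levels_general {X : Type*}
    [TopologicalSpace X] [MeasurableSpace X] [BorelSpace X]
    (D : DynSys X) :
    ∃ (X' : Set X) (O : ℕ → Set ℝ), D.InessRed X' ∧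
      (∀ i, IsOpen (O i)) ∧
      (∀ U : Set ℝ, IsOpen U → ∀ t ∈ U, ∃ i, t ∈ O i ∧ O i ⊆ U) ∧
      ∀ i, IsClopen {x : ↥X' | Real.log (D.ω ↑x) ∈ O i} := by
  set f : X → ℝ := fun x => Real.log (D.ω x)
  have hf : Continuous f := D.ωCont.log fun x => (D.ωPos x).ne'
  obtain ⟨e, he_dense, he_null⟩ :=
    exists_denseRange_measure_preimage_singleton_eq_zero D.μ hf.measurable
  set G := f ⁻¹' (range e)ᶜ
  have hG : IsGδ G := (countable_range e).isGδ_compl.preimage hf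
  have hG_ae : ∀ᵐ x ∂D.μ, x ∈ G := by
    filter_upwards [ae_all_iff.2 fun n => measure_eq_zero_iff_ae_notMem.1 (he_null n)]
      with x hx ⟨n, hn⟩ using hx n hn.symm
  set X' := ⋂ n : ℤ, D.iter n ⁻¹' G
  have hX'_avoids : ∀ (x : X') n, f x ≠ e n := fun x n hxn =>
    mem_iInter.1 x.2 0 ⟨n, hxn.symm⟩
  refine ⟨X', fun i => Ioo (e i.unpair.1) (e i.unpair.2),
    D.inessRed_iInter_preimage_iter hG hG_ae, fun _ => isOpen_Ioo,
    fun U hU t ht => he_dense.exists_Ioo_unpair_mem_subset hU ht, fun i => ?_⟩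
  exact isClopen_preimage_Ioo_of_forall_ne (hf.comp continuous_subtype_val)
    (fun x => hX'_avoids x _) (fun x => hX'_avoids x _)

/-- **Lemma 1.8.** There are an inessential reduction `X̃` and a countable base
`(Oᵢ)` of the topology of `ℝ` such that each set `{x ∈ X̃ : ρ_μ(x,Tx) ∈ Oᵢ}`
is relatively clopen in `X̃`. -/
theorem exists_inessential_reduction_clopen_levels {X : Type*}
    [TopologicalSpace X] [PolishSpace X] [MeasurableSpace X] [BorelSpace X]
    (D : DynSys X) :
    ∃ (X' : Set X) (O : ℕ → Set ℝ), D.InessRed X' ∧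
      (∀ i, IsOpen (O i)) ∧
      (∀ U : Set ℝ, IsOpen U → ∀ t ∈ U, ∃ i, t ∈ O i ∧ O i ⊆ U) ∧
      ∀ i, IsClopen {x : ↥X' | Real.log (D.ω ↑x) ∈ O i} :=
  exists_inessential_reduction_clopen_levels_general D
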